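/- Let V and W be finite-dimensional real inner product spaces with dim W < dim V − 2, and let β : V × V → W be a symmetric bilinear map. If W(β) = 0, then there exist a vector ξ ∈ W and a linear subspace V₁ ⊆ V with dim V₁ ≥ dim V − dim W such that β(x,y) = ⟨x,y⟩ ξ for all x ∈ V₁ and all y ∈ V. -/

import Mathlib

open scoped RealInnerProductSpace
open Module

noncomputable section

variable {V W : Type*}
  [NormedAddCommGroup V] [InnerProductSpace ℝ V] [FiniteDimensional ℝ V]
  [NormedAddCommGroup W] [InnerProductSpace ℝ W] [FiniteDimensional ℝ W]

/-- Kulkarni–Nomizu product of two `W`-valued symmetric bilinear maps, as a `(0,4)`-tensor. -/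
def kn (β γ : V → V → W) (x₁ x₂ x₃ x₄ : V) : ℝ :=
  ⟪β x₁ x₃, γ x₂ x₄⟫ - ⟪β x₁ x₄, γ x₂ x₃⟫ + ⟪β x₂ x₄, γ x₁ x₃⟫ - ⟪β x₂ x₃, γ x₁ x₄⟫

/-- Kulkarni–Nomizu product `⟨·,·⟩ ⌀ ⟨·,·⟩` of the inner product with itself. -/
def knG (x₁ x₂ x₃ x₄ : V) : ℝ :=
  2 * (⟪x₁, x₃⟫ * ⟪x₂, x₄⟫) - 2 * (⟪x₁, x₄⟫ * ⟪x₂, x₃⟫)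

/-- `R(β) = (1/2) β ⌀ β`. -/
def Rt (β : V → V → W) (x₁ x₂ x₃ x₄ : V) : ℝ := (1 / 2) * kn β β x₁ x₂ x₃ x₄

/-- `Ric(β)(x,y) = trace of z ↦ R(β)(z,x,z,y)`. -/
def ric (β : V → V → W) (x y : V) : ℝ :=
  ∑ i, Rt β (stdOrthonormalBasis ℝ V i) x (stdOrthonormalBasis ℝ V i) y

/-- `scal(β) = trace Ric(β)`. -/
def scal (β : V → V → W) : ℝ :=
  ∑ i, ric β (stdOrthonormalBasis ℝ V i) (stdOrthonormalBasis ℝ V i)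

/-- `‖β‖²`, the squared Euclidean norm of a bilinear map. -/
def bnormSq (β : V → V → W) : ℝ :=
  ∑ i, ∑ j, ‖β (stdOrthonormalBasis ℝ V i) (stdOrthonormalBasis ℝ V j)‖ ^ 2

/-- `trace β = Σ_i β(e_i, e_i)`. -/
def btrace (β : V → V → W) : W :=
  ∑ i, β (stdOrthonormalBasis ℝ V i) (stdOrthonormalBasis ℝ V i)

/-- Squared Euclidean norm of a `(0,4)`-tensor. -/
def tnormSq (T : V → V → V → V → ℝ) : ℝ :=
  ∑ i, ∑ j, ∑ l, ∑ m,
    (T (stdOrthonormalBasis ℝ V i) (stdOrthonormalBasis ℝ V j)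
       (stdOrthonormalBasis ℝ V l) (stdOrthonormalBasis ℝ V m)) ^ 2

/-- Index of a selfadjoint endomorphism: the maximal dimension of a subspace on which
`x ↦ ⟪T x, x⟫` is negative definite (= number of negative eigenvalues with multiplicity). -/
def negIdx (T : V →ₗ[ℝ] V) : ℕ :=
  sSup {d | ∃ U : Submodule ℝ V, finrank ℝ U = d ∧ ∀ x ∈ U, x ≠ 0 → ⟪T x, x⟫ < 0}

/-- Number of positive eigenvalues (with multiplicity) of a selfadjoint endomorphism. -/
def posIdx (T : V →ₗ[ℝ] V) : ℕ :=
  sSup {d | ∃ U : Submodule ℝ V, finrank ℝ U = d ∧ ∀ x ∈ U, x ≠ 0 → 0 < ⟪T x, x⟫}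

/-- Schouten tensor `L(β)`. -/
def schouten (β : V → V → W) (x y : V) : ℝ :=
  (1 / ((finrank ℝ V : ℝ) - 2)) *
    (ric β x y - scal β / (2 * ((finrank ℝ V : ℝ) - 1)) * ⟪x, y⟫)

/-- `L ⌀ ⟨·,·⟩` for a real-valued bilinear form `L`. -/
def knLG (L : V → V → ℝ) (x₁ x₂ x₃ x₄ : V) : ℝ :=
  L x₁ x₃ * ⟪x₂, x₄⟫ + L x₂ x₄ * ⟪x₁, x₃⟫ - L x₁ x₄ * ⟪x₂, x₃⟫ - L x₂ x₃ * ⟪x₁, x₄⟫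

/-- Weyl tensor `W(β) = R(β) − L(β) ⌀ ⟨·,·⟩`. -/
def Wt (β : V → V → W) (x₁ x₂ x₃ x₄ : V) : ℝ :=
  Rt β x₁ x₂ x₃ x₄ - knLG (schouten β) x₁ x₂ x₃ x₄

/-!
`W(β) = 0` is the Gauss equation `R(β) = L ⌀ ⟨·,·⟩` for the Schouten tensor `L`, which says
precisely that `μ = (β, ⟨·,·⟩, -L) : V × V → W × ℝ × ℝ` is flat for the Lorentzian form
`⟪w, w'⟫ + a c' + a' c`. By Moore's lemma, at a point `x₀` where `μ x₀` has maximal rank the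
values `μ(y, z)` with `z ∈ ker μ(x₀)` are mutually orthogonal null vectors. As
`dim W + 2 < dim V`, that kernel contains some `z₀ ≠ 0`, and orthogonal null vectors are
proportional, so `β(y, z₀) = ⟨y, z₀⟩ ξ` and `L(y, z₀) = ⟨y, z₀⟩ ‖ξ‖² / 2`. The Gauss equation
at `z₀` then gives `L = ⟨β, ξ⟩ - ‖ξ‖² / 2 ⟨·,·⟩`, so `β - ⟨·,·⟩ ξ` is flat for the inner product
of `W`, and Moore's lemma in the definite case makes it vanish on a subspace of codimension
at most `dim W`.
-/

open LinearMap

section GenericPoint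

variable {E U : Type*} [AddCommGroup E] [Module ℝ E]
  [NormedAddCommGroup U] [NormedSpace ℝ U] [FiniteDimensional ℝ U]

theorem LinearMap.apply_mem_range_of_finrank_range_add_smul_le (A C : E →ₗ[ℝ] U)
    (h : ∀ t : ℝ, finrank ℝ (range (A + t • C)) ≤ finrank ℝ (range A))
    {z : E} (hz : A z = 0) : C z ∈ range A := by
  by_contra hCz
  set r := finrank ℝ (range A)
  set b := finBasis ℝ (range A)
  choose v hv using fun i => (b i).2
  -- `f 0` is independent and independence is an open condition, but for `t ≠ 0` the family
  -- `f t` lies in `range (A + t • C)`, since `(A + t • C) (t⁻¹ • z) = C z`.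
  let f : ℝ → Fin (r + 1) → U := fun t => Fin.snoc (fun i => (A + t • C) (v i)) (C z)
  have hf₀ : LinearIndependent ℝ (f 0) := by
    have hspan : Submodule.span ℝ (Set.range fun i => (b i : U)) ≤ range A :=
      Submodule.span_le.mpr (by rintro _ ⟨i, rfl⟩; exact (b i).2)
    simp only [f, zero_smul, add_zero, hv]
    exact linearIndependent_finSnoc.mpr
      ⟨b.linearIndependent.map' _ (Submodule.ker_subtype _), fun h => hCz (hspan h)⟩
  have hf : Continuous f := by
    refine continuous_pi fun j => Fin.lastCases ?_ (fun i => ?_) j <;> simp only [f,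
      Fin.snoc_last, Fin.snoc_castSucc, add_apply, smul_apply] <;> fun_prop
  obtain ⟨t, hindep, ht⟩ := (((hf.continuousAt.eventually hf₀.eventually).filter_mono
    nhdsWithin_le_nhds).and (self_mem_nhdsWithin (s := {(0 : ℝ)}ᶜ))).exists
  have hspan : Submodule.span ℝ (Set.range (f t)) ≤ range (A + t • C) := by
    refine Submodule.span_le.mpr ?_
    rintro _ ⟨j, rfl⟩
    refine Fin.lastCases ?_ (fun i => ?_) j
    · exact ⟨t⁻¹ • z, by simp [f, hz, smul_smul, inv_mul_cancel₀ ht]⟩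
    · exact ⟨v i, by simp [f]⟩
  have := (Submodule.finrank_mono hspan).trans (h t)
  rw [finrank_span_eq_card hindep, Fintype.card_fin] at this
  omega

theorem LinearMap.exists_apply_mem_range_of_apply_eq_zero (μ : E →ₗ[ℝ] E →ₗ[ℝ] U) :
    ∃ x₀ : E, ∀ y z : E, μ x₀ z = 0 → μ y z ∈ range (μ x₀) := by
  have hbdd : BddAbove (Set.range fun x => finrank ℝ (range (μ x))) :=
    ⟨finrank ℝ U, by rintro _ ⟨x, rfl⟩; exact Submodule.finrank_le _⟩
  obtain ⟨x₀, hx₀⟩ := Nat.sSup_mem (Set.range_nonempty _) hbdd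
  refine ⟨x₀, fun y z hz => apply_mem_range_of_finrank_range_add_smul_le _ _ (fun t => ?_) hz⟩
  rw [← map_smul, ← map_add]
  exact (le_csSup hbdd ⟨_, rfl⟩).trans_eq hx₀.symm

end GenericPoint

section Flat

variable {R E U : Type*} [CommRing R] [AddCommGroup E] [Module R E] [AddCommGroup U] [Module R U]

def IsFlat (B : LinearMap.BilinForm R U) (μ : E →ₗ[R] E →ₗ[R] U) : Prop :=
  ∀ x z y w : E, B (μ x z) (μ y w) = B (μ x w) (μ y z)

theorem IsFlat.apply_apply_eq_zero {B : LinearMap.BilinForm R U} {μ : E →ₗ[R] E →ₗ[R] U}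
    (hμ : IsFlat B μ) {x₀ : E} (hx₀ : ∀ y z : E, μ x₀ z = 0 → μ y z ∈ range (μ x₀))
    {z z' : E} (hz : μ x₀ z = 0) (hz' : μ x₀ z' = 0) (y y' : E) :
    B (μ y z) (μ y' z') = 0 := by
  obtain ⟨w, hw⟩ := hx₀ y z hz
  rw [← hw, hμ, hz', map_zero, LinearMap.zero_apply]

end Flat

theorem IsFlat.exists_finrank_le_forall_apply_eq_zero {E F : Type*}
    [AddCommGroup E] [Module ℝ E] [FiniteDimensional ℝ E]
    [NormedAddCommGroup F] [InnerProductSpace ℝ F] [FiniteDimensional ℝ F]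
    {μ : E →ₗ[ℝ] E →ₗ[ℝ] F} (hμ : IsFlat (innerₗ F) μ) :
    ∃ V₁ : Submodule ℝ E, finrank ℝ E ≤ finrank ℝ V₁ + finrank ℝ F ∧
      ∀ x ∈ V₁, ∀ y : E, μ y x = 0 := by
  obtain ⟨x₀, hx₀⟩ := exists_apply_mem_range_of_apply_eq_zero μ
  refine ⟨ker (μ x₀), ?_, fun x hx y => ?_⟩
  · have := finrank_range_add_finrank_ker (μ x₀)
    have := Submodule.finrank_le (range (μ x₀))
    omega
  · have := hμ.apply_apply_eq_zero hx₀ hx hx y y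
    rwa [innerₗ_apply_apply, inner_self_eq_zero] at this

section Lorentz

variable {F : Type*} [NormedAddCommGroup F] [InnerProductSpace ℝ F]

def lorentzForm : LinearMap.BilinForm ℝ (F × ℝ × ℝ) :=
  LinearMap.mk₂ ℝ (fun p q => ⟪p.1, q.1⟫ + p.2.1 * q.2.2 + q.2.1 * p.2.2)
    (fun _ _ _ => by simp only [Prod.fst_add, Prod.snd_add, inner_add_left]; ring)
    (fun _ _ _ => by
      simp only [Prod.smul_fst, Prod.smul_snd, real_inner_smul_left, smul_eq_mul]; ring)
    (fun _ _ _ => by simp only [Prod.fst_add, Prod.snd_add, inner_add_right]; ring)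
    (fun _ _ _ => by
      simp only [Prod.smul_fst, Prod.smul_snd, real_inner_smul_right, smul_eq_mul]; ring)

theorem lorentzForm_apply (p q : F × ℝ × ℝ) :
    lorentzForm p q = ⟪p.1, q.1⟫ + p.2.1 * q.2.2 + q.2.1 * p.2.2 := rfl

theorem lorentzForm_comm (p q : F × ℝ × ℝ) : lorentzForm p q = lorentzForm q p := by
  simp only [lorentzForm_apply, real_inner_comm]; ring

theorem smul_eq_smul_of_lorentzForm_eq_zero {u u' : F × ℝ × ℝ} (hu : lorentzForm u u = 0)
    (hu' : lorentzForm u' u' = 0) (huu' : lorentzForm u u' = 0) (ha : u.2.1 ≠ 0) :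
    u.2.1 • u' = u'.2.1 • u := by
  -- `v` is null with `v.2.1 = 0`, hence `v.1 = 0`, and then `0 = ⟪v, u⟫ = u.2.1 * v.2.2`.
  set v := u.2.1 • u' - u'.2.1 • u with hv
  have hv₂ : v.2.1 = 0 := by simp only [hv, Prod.snd_sub, Prod.smul_snd, Prod.fst_sub,
    Prod.smul_fst, smul_eq_mul]; ring
  have hvv : lorentzForm v v = 0 := by
    simp [hv, hu, hu', huu', lorentzForm_comm u' u]
  have hvu : lorentzForm v u = 0 := by
    simp [hv, hu, lorentzForm_comm u' u, huu']
  have hv₁ : v.1 = 0 := by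
    rwa [lorentzForm_apply, hv₂, zero_mul, add_zero, add_zero, inner_self_eq_zero] at hvv
  have hv₃ : v.2.2 = 0 := by
    rw [lorentzForm_apply, hv₁, hv₂, inner_zero_left, zero_mul, zero_add, zero_add] at hvu
    exact (mul_eq_zero.mp hvu).resolve_left ha
  exact sub_eq_zero.mp (Prod.ext hv₁ (Prod.ext hv₂ hv₃))

end Lorentz

section Gauss

variable {E F : Type*} [NormedAddCommGroup E] [InnerProductSpace ℝ E]
  [NormedAddCommGroup F] [InnerProductSpace ℝ F]

def GaussEquation (β : E →ₗ[ℝ] E →ₗ[ℝ] F) (L : E →ₗ[ℝ] E →ₗ[ℝ] ℝ) : Prop :=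
  ∀ x₁ x₂ x₃ x₄ : E,
    ⟪β x₁ x₃, β x₂ x₄⟫ - ⟪β x₁ x₄, β x₂ x₃⟫ = knLG (fun x y => L x y) x₁ x₂ x₃ x₄

theorem Rt_apply (β : E →ₗ[ℝ] E →ₗ[ℝ] F) (x₁ x₂ x₃ x₄ : E) :
    Rt (fun x y => β x y) x₁ x₂ x₃ x₄ = ⟪β x₁ x₃, β x₂ x₄⟫ - ⟪β x₁ x₄, β x₂ x₃⟫ := by
  simp only [Rt, kn, real_inner_comm (β x₂ x₄), real_inner_comm (β x₂ x₃)]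
  ring

variable [FiniteDimensional ℝ E]

def ricForm (β : E →ₗ[ℝ] E →ₗ[ℝ] F) : E →ₗ[ℝ] E →ₗ[ℝ] ℝ :=
  LinearMap.mk₂ ℝ (ric fun x y => β x y)
    (fun _ _ _ => by
      simp only [ric, Rt_apply, map_add, LinearMap.add_apply, inner_add_right,
        ← Finset.sum_add_distrib]
      exact Finset.sum_congr rfl fun _ _ => by ring)
    (fun _ _ _ => by
      simp only [ric, Rt_apply, map_smul, LinearMap.smul_apply, real_inner_smul_right,
        smul_eq_mul, Finset.mul_sum]
      exact Finset.sum_congr rfl fun _ _ => by ring)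
    (fun _ _ _ => by
      simp only [ric, Rt_apply, map_add, inner_add_left, inner_add_right,
        ← Finset.sum_add_distrib]
      exact Finset.sum_congr rfl fun _ _ => by ring)
    (fun _ _ _ => by
      simp only [ric, Rt_apply, map_smul, real_inner_smul_left, real_inner_smul_right,
        smul_eq_mul, Finset.mul_sum]
      exact Finset.sum_congr rfl fun _ _ => by ring)

theorem ricForm_apply (β : E →ₗ[ℝ] E →ₗ[ℝ] F) (x y : E) :
    ricForm β x y = ric (fun x y => β x y) x y := rfl

theorem ricForm_comm {β : E →ₗ[ℝ] E →ₗ[ℝ] F} (hβ : ∀ x y, β x y = β y x) (x y : E) :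
    ricForm β x y = ricForm β y x := by
  rw [ricForm_apply, ricForm_apply]
  exact Finset.sum_congr rfl fun _ _ => by
    rw [Rt_apply, Rt_apply, hβ y x, hβ _ x, hβ y, real_inner_comm (β x _),
      real_inner_comm (β _ y) (β x _)]

def schoutenForm (β : E →ₗ[ℝ] E →ₗ[ℝ] F) : E →ₗ[ℝ] E →ₗ[ℝ] ℝ :=
  (1 / ((finrank ℝ E : ℝ) - 2)) •
    (ricForm β - (scal (fun x y => β x y) / (2 * ((finrank ℝ E : ℝ) - 1))) • innerₗ E)

theorem schoutenForm_comm {β : E →ₗ[ℝ] E →ₗ[ℝ] F} (hβ : ∀ x y, β x y = β y x) (x y : E) :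
    schoutenForm β x y = schoutenForm β y x := by
  simp only [schoutenForm, LinearMap.smul_apply, LinearMap.sub_apply, ricForm_comm hβ x y,
    innerₗ_apply_apply, real_inner_comm x]

theorem gaussEquation_of_Wt_eq_zero {β : E →ₗ[ℝ] E →ₗ[ℝ] F}
    (hW : ∀ x₁ x₂ x₃ x₄ : E, Wt (fun x y => β x y) x₁ x₂ x₃ x₄ = 0) :
    GaussEquation β (schoutenForm β) := fun x₁ x₂ x₃ x₄ => by
  rw [← Rt_apply, ← sub_eq_zero]
  exact hW x₁ x₂ x₃ x₄

end Gauss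

section Lift

variable {E F : Type*} [NormedAddCommGroup E] [InnerProductSpace ℝ E]
  [NormedAddCommGroup F] [InnerProductSpace ℝ F]

def lorentzLift (β : E →ₗ[ℝ] E →ₗ[ℝ] F) (L : E →ₗ[ℝ] E →ₗ[ℝ] ℝ) :
    E →ₗ[ℝ] E →ₗ[ℝ] F × ℝ × ℝ :=
  LinearMap.mk₂ ℝ (fun x y => (β x y, ⟪x, y⟫, -L x y))
    (fun _ _ _ => by simp only [map_add, LinearMap.add_apply, inner_add_left, neg_add,
      Prod.mk_add_mk])
    (fun _ _ _ => by simp only [map_smul, LinearMap.smul_apply, real_inner_smul_left,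
      Prod.smul_mk, smul_eq_mul, mul_neg])
    (fun _ _ _ => by simp only [map_add, inner_add_right, neg_add, Prod.mk_add_mk])
    (fun _ _ _ => by simp only [map_smul, real_inner_smul_right, Prod.smul_mk, smul_eq_mul,
      mul_neg])

theorem lorentzLift_apply (β : E →ₗ[ℝ] E →ₗ[ℝ] F) (L : E →ₗ[ℝ] E →ₗ[ℝ] ℝ) (x y : E) :
    lorentzLift β L x y = (β x y, ⟪x, y⟫, -L x y) := rfl

theorem GaussEquation.isFlat_lorentzLift {β : E →ₗ[ℝ] E →ₗ[ℝ] F} {L : E →ₗ[ℝ] E →ₗ[ℝ] ℝ}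
    (hG : GaussEquation β L) : IsFlat lorentzForm (lorentzLift β L) := fun x z y w => by
  have h := hG x y z w
  simp only [knLG] at h
  simp only [lorentzForm_apply, lorentzLift_apply]
  linear_combination h

theorem GaussEquation.exists_inner_smul [FiniteDimensional ℝ E] [FiniteDimensional ℝ F]
    {β : E →ₗ[ℝ] E →ₗ[ℝ] F} {L : E →ₗ[ℝ] E →ₗ[ℝ] ℝ}
    (hG : GaussEquation β L) (hdim : finrank ℝ F + 2 < finrank ℝ E) :
    ∃ z₀ : E, z₀ ≠ 0 ∧ ∃ ξ : F, ∀ y : E,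
      β y z₀ = ⟪y, z₀⟫ • ξ ∧ L y z₀ = ⟪y, z₀⟫ * (⟪ξ, ξ⟫ / 2) := by
  set μ := lorentzLift β L
  obtain ⟨x₀, hx₀⟩ := exists_apply_mem_range_of_apply_eq_zero μ
  obtain ⟨z₀, hz₀, hz₀_ne⟩ : ∃ z₀ ∈ ker (μ x₀), z₀ ≠ 0 := by
    refine Submodule.exists_mem_ne_zero_of_ne_bot fun hker => ?_
    have h₁ := finrank_range_add_finrank_ker (μ x₀)
    have h₂ := Submodule.finrank_le (range (μ x₀))
    rw [hker, finrank_bot] at h₁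
    rw [finrank_prod, finrank_prod, finrank_self] at h₂
    omega
  have horth := hG.isFlat_lorentzLift.apply_apply_eq_zero hx₀ hz₀ hz₀
  have ha : ⟪z₀, z₀⟫ ≠ 0 := inner_self_ne_zero.mpr hz₀_ne
  refine ⟨z₀, hz₀_ne, ⟪z₀, z₀⟫⁻¹ • β z₀ z₀, fun y => ?_⟩
  have hprop := smul_eq_smul_of_lorentzForm_eq_zero (horth z₀ z₀) (horth y y) (horth z₀ y) ha
  have hnull := horth z₀ z₀
  simp only [lorentzForm_apply, lorentzLift_apply, Prod.smul_mk, Prod.mk.injEq, smul_eq_mul]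
    at hprop hnull
  obtain ⟨hβy, -, hLy⟩ := hprop
  constructor
  · rw [smul_comm, ← hβy, smul_smul, inv_mul_cancel₀ ha, one_smul]
  · have hB : ⟪β z₀ z₀, β z₀ z₀⟫ = 2 * ⟪z₀, z₀⟫ * L z₀ z₀ := by linear_combination hnull
    rw [real_inner_smul_left, real_inner_smul_right, hB]
    field_simp
    linear_combination -hLy

theorem GaussEquation.apply_eq_inner_sub {β : E →ₗ[ℝ] E →ₗ[ℝ] F} {L : E →ₗ[ℝ] E →ₗ[ℝ] ℝ}
    (hG : GaussEquation β L) (hβ : ∀ x y, β x y = β y x) (hL : ∀ x y, L x y = L y x)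
    {z₀ : E} (hz₀ : z₀ ≠ 0) {ξ : F}
    (hξ : ∀ y : E, β y z₀ = ⟪y, z₀⟫ • ξ ∧ L y z₀ = ⟪y, z₀⟫ * (⟪ξ, ξ⟫ / 2)) (x y : E) :
    L x y = ⟪β x y, ξ⟫ - ⟪ξ, ξ⟫ / 2 * ⟪x, y⟫ := by
  have h := hG z₀ x z₀ y
  simp only [knLG] at h
  rw [hβ z₀ y, hL z₀ y, (hξ z₀).1, (hξ y).1, (hξ x).1, (hξ z₀).2, (hξ y).2, (hξ x).2,
    real_inner_smul_left, real_inner_smul_left, real_inner_smul_right] at h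
  refine mul_left_cancel₀ (inner_self_ne_zero.mpr hz₀) ?_
  linear_combination -h + ⟪z₀, z₀⟫ * real_inner_comm (β x y) ξ
    + ⟪ξ, ξ⟫ / 2 * ⟪x, z₀⟫ * real_inner_comm y z₀

theorem GaussEquation.isFlat_sub {β : E →ₗ[ℝ] E →ₗ[ℝ] F} {L : E →ₗ[ℝ] E →ₗ[ℝ] ℝ}
    (hG : GaussEquation β L) {ξ : F}
    (hL : ∀ x y, L x y = ⟪β x y, ξ⟫ - ⟪ξ, ξ⟫ / 2 * ⟪x, y⟫) :
    IsFlat (innerₗ F) (β - (innerₗ E).compr₂ (toSpanSingleton ℝ F ξ)) := fun x z y w => by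
  have h := hG x y z w
  simp only [knLG, hL] at h
  simp only [innerₗ_apply_apply, LinearMap.sub_apply, compr₂_apply, toSpanSingleton_apply,
    inner_sub_left, inner_sub_right, real_inner_smul_left, real_inner_smul_right]
  linear_combination h - ⟪x, z⟫ * real_inner_comm (β y w) ξ
    + ⟪x, w⟫ * real_inner_comm (β y z) ξ

end Lift

/-- If `dim W < dim V − 2` and the Weyl tensor of the symmetric bilinear map
`β : V × V → W` vanishes, then there are `ξ ∈ W` and a subspace `V₁ ⊆ V` with
`dim V₁ ≥ dim V − dim W` such that `β(x,y) = ⟨x,y⟩ ξ` for all `x ∈ V₁`, `y ∈ V`. -/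
theorem stmt3 (β : V →ₗ[ℝ] V →ₗ[ℝ] W) (hβ : ∀ x y, β x y = β y x)
    (hdim : finrank ℝ W + 2 < finrank ℝ V)
    (hW : ∀ x₁ x₂ x₃ x₄ : V, Wt (fun x y => β x y) x₁ x₂ x₃ x₄ = 0) :
    ∃ ξ : W, ∃ V₁ : Submodule ℝ V,
      finrank ℝ V ≤ finrank ℝ (V₁ : Submodule ℝ V) + finrank ℝ W ∧
      ∀ x ∈ V₁, ∀ y : V, β x y = ⟪x, y⟫ • ξ := by
  have hG := gaussEquation_of_Wt_eq_zero hW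
  obtain ⟨z₀, hz₀, ξ, hξ⟩ := hG.exists_inner_smul hdim
  have hL := hG.apply_eq_inner_sub hβ (schoutenForm_comm hβ) hz₀ hξ
  obtain ⟨V₁, hV₁, hflat⟩ := (hG.isFlat_sub hL).exists_finrank_le_forall_apply_eq_zero
  refine ⟨ξ, V₁, hV₁, fun x hx y => ?_⟩
  have h := hflat x hx y
  rw [LinearMap.sub_apply, LinearMap.sub_apply, sub_eq_zero, compr₂_apply, innerₗ_apply_apply,
    toSpanSingleton_apply] at h
  rw [hβ, h, real_inner_comm]
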